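/- arXiv:2310.04088 — 9 statements merged into one kernel-verified Lean document; each statement's English description precedes it below -/
import Mathlib

section
/- Let K be an n×n real matrix and for t = (t_1,...,t_n) ∈ ℝ^n define K(t) = K · diag(t_1,...,t_n). Define matrices Ξ_ℓ for ℓ ∈ ℤ^n recursively by Ξ_ℓ = 0 if ℓ ∈ ℤ^n \ ℕ^n, Ξ_0 = I_n, and Ξ_ℓ = Σ_{k=1}^n K e_k e_k^T Ξ_{ℓ-e_k} for ℓ ∈ ℕ^n with |ℓ| > 0. Then for every j ∈ ℕ and t ∈ ℝ^n, K(t)^j = Σ_{ℓ ∈ ℕ^n, |ℓ|=j} Ξ_ℓ t^ℓ, where t^ℓ = t_1^{ℓ_1} ⋯ t_n^{ℓ_n}. -/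
open Matrix Finset

/-- With `Ξ` defined recursively, `(K·diag t)^j = ∑_{|ℓ|=j} Ξ_ℓ t^ℓ`. -/
theorem stmt0 {n : ℕ} (hn : 0 < n) (K : Matrix (Fin n) (Fin n) ℝ)
    (Xi : (Fin n → ℤ) → Matrix (Fin n) (Fin n) ℝ)
    (hXineg : ∀ ℓ : Fin n → ℤ, (∃ i, ℓ i < 0) → Xi ℓ = 0)
    (hXizero : Xi 0 = 1)
    (hXirec : ∀ ℓ : Fin n → ℤ, (∀ i, 0 ≤ ℓ i) → ℓ ≠ 0 →
      Xi ℓ = ∑ k : Fin n,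
        (K * Matrix.single k k (1 : ℝ)) * Xi (fun i => ℓ i - if i = k then 1 else 0)) :
    ∀ (j : ℕ) (t : Fin n → ℝ),
      (K * Matrix.diagonal t) ^ j =
        ∑ ℓ ∈ Finset.Nat.antidiagonalTuple n j,
          (∏ i, t i ^ ℓ i) • Xi (fun i => (ℓ i : ℤ)) := by
  intro j t
  induction j with
  | zero =>
      have h0 : (fun i : Fin n => (((0 : Fin n → ℕ) i : ℤ))) = (0 : Fin n → ℤ) := by
        funext i; simp
      simp only [Finset.Nat.antidiagonalTuple_zero_right, Finset.sum_singleton,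
        Pi.zero_apply, pow_zero, Finset.prod_const_one, one_smul, pow_zero]
      exact hXizero.symm
  | succ j ih =>
      have hdiag : K * Matrix.diagonal t
          = ∑ k : Fin n, t k • (K * Matrix.single k k (1 : ℝ)) := by
        have hd : Matrix.diagonal t = ∑ k : Fin n, Matrix.single k k (t k) := by
          ext i l
          rw [Matrix.sum_apply]
          simp only [Matrix.single, Matrix.of_apply, Matrix.diagonal_apply]
          by_cases h : i = l
          · subst h; simp
          · rw [if_neg h, Finset.sum_eq_zero]
            intro x _
            rw [if_neg]
            rintro ⟨rfl, rfl⟩; exact h rfl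
        rw [hd, Finset.mul_sum]
        refine Finset.sum_congr rfl fun k _ => ?_
        rw [← Matrix.mul_smul, Matrix.smul_single, smul_eq_mul, mul_one]
      rw [pow_succ', ih, hdiag, Finset.sum_mul]
      -- RHS: expand the recursion
      have hrhs : ∑ m ∈ Finset.Nat.antidiagonalTuple n (j + 1),
            (∏ i, t i ^ m i) • Xi (fun i => (m i : ℤ))
          = ∑ k : Fin n, ∑ m ∈ Finset.Nat.antidiagonalTuple n (j + 1),
              (∏ i, t i ^ m i) •
                ((K * Matrix.single k k (1 : ℝ)) *
                  Xi (fun i => (m i : ℤ) - if i = k then 1 else 0)) := by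
        rw [Finset.sum_comm]
        refine Finset.sum_congr rfl fun m hm => ?_
        have hm' : ∑ i, m i = j + 1 := Finset.Nat.mem_antidiagonalTuple.mp hm
        have hne : (fun i => (m i : ℤ)) ≠ 0 := by
          intro h
          have : ∀ i, m i = 0 := fun i => by
            simpa using congrFun h i
          simp [Finset.sum_congr rfl fun i _ => this i] at hm'
        rw [hXirec _ (fun i => Int.natCast_nonneg _) hne, Finset.smul_sum]
      rw [hrhs]
      refine Finset.sum_congr rfl fun k _ => ?_
      -- Fixed k: reindex
      have hvanish : ∀ m ∈ Finset.Nat.antidiagonalTuple n (j + 1),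
          ((∏ i, t i ^ m i) •
            ((K * Matrix.single k k (1 : ℝ)) *
              Xi (fun i => (m i : ℤ) - if i = k then 1 else 0))) ≠ 0 → m k ≠ 0 := by
        intro m _ hne hk
        apply hne
        have : Xi (fun i => (m i : ℤ) - if i = k then 1 else 0) = 0 := by
          apply hXineg
          exact ⟨k, by simp [hk]⟩
        rw [this, mul_zero, smul_zero]
      rw [← Finset.sum_filter_of_ne hvanish]
      rw [smul_mul_assoc, Finset.mul_sum, Finset.smul_sum]
      simp only [Matrix.mul_smul, smul_smul]
      refine Finset.sum_bij' (fun ℓ _ => fun i => ℓ i + if i = k then 1 else 0)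
        (fun m _ => fun i => m i - if i = k then 1 else 0) ?_ ?_ ?_ ?_ ?_
      · intro ℓ hℓ
        have hℓ' : ∑ i, ℓ i = j := Finset.Nat.mem_antidiagonalTuple.mp hℓ
        rw [Finset.mem_filter]
        constructor
        · rw [Finset.Nat.mem_antidiagonalTuple, Finset.sum_add_distrib, hℓ',
            Finset.sum_ite_eq' Finset.univ k (fun _ => 1), if_pos (Finset.mem_univ k)]
        · simp
      · intro m hm
        rw [Finset.mem_filter] at hm
        obtain ⟨hm1, hm2⟩ := hm
        have hm1' : ∑ i, m i = j + 1 := Finset.Nat.mem_antidiagonalTuple.mp hm1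
        rw [Finset.Nat.mem_antidiagonalTuple]
        have key : ∑ i, (m i - if i = k then 1 else 0) + 1 = j + 1 := by
          have : ∀ i ∈ Finset.univ, (m i - if i = k then 1 else 0) + (if i = k then 1 else 0) = m i := by
            intro i _
            split
            · subst ‹i = k›; omega
            · omega
          calc ∑ i, (m i - if i = k then 1 else 0) + 1
              = ∑ i, (m i - if i = k then 1 else 0) + ∑ i, (if i = k then 1 else 0) := by
                rw [Finset.sum_ite_eq' Finset.univ k (fun _ => 1), if_pos (Finset.mem_univ k)]
            _ = ∑ i, ((m i - if i = k then 1 else 0) + (if i = k then 1 else 0)) := by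
                rw [Finset.sum_add_distrib]
            _ = ∑ i, m i := Finset.sum_congr rfl this
            _ = j + 1 := hm1'
        exact Nat.add_right_cancel key
      · intro ℓ _
        funext i
        dsimp only
        by_cases h : i = k <;> simp [h]
      · intro m hm
        rw [Finset.mem_filter] at hm
        obtain ⟨-, hm2⟩ := hm
        funext i
        dsimp only
        by_cases h : i = k
        · subst h; rw [if_pos rfl]; omega
        · simp [h]
      · intro ℓ hℓ
        congr 1
        · rw [mul_comm]
          rw [Finset.prod_congr rfl (fun i _ => pow_add (t i) (ℓ i) _), Finset.prod_mul_distrib]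
          congr 1
          symm
          calc ∏ x, t x ^ (if x = k then 1 else 0)
              = ∏ x, (if x = k then t x else 1) :=
                Finset.prod_congr rfl (fun x _ => by split <;> simp)
            _ = t k := by rw [Finset.prod_ite_eq' Finset.univ k t]; simp
        · congr 1
          funext i
          dsimp only
          by_cases h : i = k <;> simp [h]
end

section
/- Let K ∈ M_{n,n}(ℝ) and define A(t) = I_n − K·diag(t_1,...,t_n). Then the adjugate matrix Adj(A(t)) is multilinear in t_1,...,t_n: there exist matrices M_ℓ ∈ M_{n,n}(ℝ) for ℓ ∈ {0,1}^n, with M_0 = I_n, such that Adj(A(t)) = Σ_{ℓ ∈ {0,1}^n} M_ℓ t^ℓ. Moreover, for every j ∈ {1,...,n} and every ℓ ∈ {0,1}^n with ℓ_j = 1, the j-th row of M_ℓ vanishes: e_j^T M_ℓ = 0. In particular M_{(1,...,1)} = 0. -/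
open Matrix Finset

noncomputable def fdet {n : ℕ} : MultilinearMap ℝ (fun _ : Fin n => (Fin n → ℝ)) ℝ :=
  (Matrix.detRowAlternating : (Fin n → ℝ) [⋀^Fin n]→ₗ[ℝ] ℝ).toMultilinearMap

theorem fdet_eq {n : ℕ} (m : Fin n → Fin n → ℝ) : fdet m = (Matrix.of m).det := rfl
/-- the adjugate of `I − K diag t` is multilinear in `t₁,…,tₙ`, with
`M_∅ = I`, and the `j`-th row of `M_ℓ` vanishes whenever `ℓ_j = 1`; in particular
`M_{(1,…,1)} = 0`. -/

theorem stmt3 {n : ℕ} (hn : 0 < n) (K : Matrix (Fin n) (Fin n) ℝ) :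
    ∃ M : Finset (Fin n) → Matrix (Fin n) (Fin n) ℝ,
      M ∅ = 1 ∧
      (∀ t : Fin n → ℝ,
        (1 - K * Matrix.diagonal t).adjugate =
          ∑ S : Finset (Fin n), (∏ i ∈ S, t i) • M S) ∧
      (∀ (S : Finset (Fin n)) (j : Fin n), j ∈ S → ∀ c, M S j c = 0) ∧
      M Finset.univ = 0 := by
  classical
  set u : Fin n → Fin n → Fin n → Fin n → ℝ :=
    fun j c i => if i = j then Pi.single c 1 else Pi.single i 1 with hu
  set w : Fin n → Fin n → Fin n → ℝ :=
    fun j i => if i = j then 0 else (fun k => -K k i) with hw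
  refine ⟨fun S => Matrix.of fun j c => fdet (S.piecewise (w j) (u j c)), ?_, ?_, ?_, ?_⟩
  · ext j c
    simp only [Matrix.of_apply, Finset.piecewise_empty]
    have h1 : Matrix.of (u j c) = (1 : Matrix (Fin n) (Fin n) ℝ).updateRow j (Pi.single c 1) := by
      ext i k
      by_cases h : i = j
      · subst h; simp [hu, Matrix.updateRow_self]
      · { simp only [hu, Matrix.of_apply, if_neg h, Pi.single_apply, Matrix.updateRow_ne h, Matrix.one_apply]; simp [eq_comm] }
    rw [fdet_eq, h1, ← Matrix.adjugate_apply, Matrix.adjugate_one]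
    simp [Matrix.one_apply, eq_comm]
  · intro t
    ext j c
    have key : (1 - K * Matrix.diagonal t).adjugate j c
        = fdet ((fun i => t i • w j i) + u j c) := by
      have htr : ((1 - K * Matrix.diagonal t)ᵀ).updateRow j (Pi.single c 1)
          = Matrix.of ((fun i => t i • w j i) + u j c) := by
        ext i k
        by_cases h : i = j
        · subst h
          simp [hu, hw, Matrix.updateRow_self]
        · simp only [Matrix.updateRow_ne h, Matrix.transpose_apply, Matrix.sub_apply,
            Matrix.mul_apply, Matrix.diagonal_apply, Matrix.one_apply, Matrix.of_apply,
            Pi.add_apply, Pi.smul_apply, hu, hw, if_neg h, smul_eq_mul]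
          rw [Finset.sum_eq_single i (by intro b _ hb; simp [hb]) (by simp)]
          simp [Pi.single_apply, eq_comm]
          ring
      have := Matrix.adjugate_transpose (1 - K * Matrix.diagonal t)
      calc (1 - K * Matrix.diagonal t).adjugate j c
          = ((1 - K * Matrix.diagonal t).adjugate)ᵀ c j := rfl
        _ = ((1 - K * Matrix.diagonal t)ᵀ).adjugate c j := by rw [this]
        _ = (((1 - K * Matrix.diagonal t)ᵀ).updateRow j (Pi.single c 1)).det :=
            Matrix.adjugate_apply _ c j
        _ = fdet ((fun i => t i • w j i) + u j c) := by rw [htr, ← fdet_eq]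
    rw [key, fdet.map_add_univ]
    rw [Matrix.sum_apply]
    refine Finset.sum_congr rfl fun S _ => ?_
    have hpw : S.piecewise (fun i => t i • w j i) (u j c)
        = S.piecewise (fun i => t i • (S.piecewise (w j) (u j c)) i) (S.piecewise (w j) (u j c)) := by
      ext i k
      by_cases h : i ∈ S
      · simp [Finset.piecewise_eq_of_mem _ _ _ h]
      · simp [Finset.piecewise_eq_of_notMem _ _ _ h]
    rw [hpw, fdet.map_piecewise_smul]
    simp [Matrix.smul_apply]
  · intro S j hj c
    exact fdet.map_coord_zero j (by simp [Finset.piecewise_eq_of_mem _ _ _ hj, hw])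
  · ext j c
    exact fdet.map_coord_zero j (by simp [hw])
end

section
/- Let K ∈ M_{n,n}(ℝ) and Ξ_ℓ, ℓ ∈ ℤ^n, be defined by Ξ_ℓ = 0 for ℓ ∉ ℕ^n, Ξ_0 = I_n, Ξ_ℓ = Σ_{k=1}^n K e_k e_k^T Ξ_{ℓ−e_k}. Then there exist real coefficients α_k, k ∈ {0,1}^n, with α_0 = 1, such that for every j ∈ {1,...,n} and every ℓ ∈ ℕ^n satisfying (max_i ℓ_i ≥ 2 or ℓ_j = 1), one has e_j^T Ξ_ℓ = − Σ_{k ∈ {0,1}^n, k ≠ 0} α_k e_j^T Ξ_{ℓ−k}. -/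
open Matrix Finset

lemma aux_coeff_zero {σ R : Type*} [CommSemiring R] {p : MvPolynomial σ R}
    {ℓ : σ →₀ ℕ} {i : σ} (h : MvPolynomial.degreeOf i p < ℓ i) :
    MvPolynomial.coeff ℓ p = 0 := by
  by_contra hc
  exact absurd (MvPolynomial.monomial_le_degreeOf i (MvPolynomial.mem_support_iff.2 hc))
    (by omega)

lemma aux_det_degreeOf {n : ℕ} (A : Matrix (Fin n) (Fin n) (MvPolynomial (Fin n) ℝ))
    (d : Fin n → ℕ)
    (h : ∀ a b i, MvPolynomial.degreeOf i (A a b) ≤ if i = b then d b else 0) (i : Fin n) :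
    MvPolynomial.degreeOf i A.det ≤ d i := by
  classical
  rw [Matrix.det_apply']
  refine le_trans (MvPolynomial.degreeOf_sum_le _ _ _) (Finset.sup_le fun σ _ => ?_)
  refine le_trans (MvPolynomial.degreeOf_mul_le _ _ _) ?_
  have h1 : MvPolynomial.degreeOf i
      ((Equiv.Perm.sign σ : ℤ) : MvPolynomial (Fin n) ℝ) = 0 := by
    rw [← map_intCast (MvPolynomial.C : ℝ →+* MvPolynomial (Fin n) ℝ)]
    exact MvPolynomial.degreeOf_C _ _
  rw [h1, zero_add]
  refine le_trans (MvPolynomial.degreeOf_prod_le _ _ _) ?_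
  calc ∑ b, MvPolynomial.degreeOf i (A (σ b) b)
      ≤ ∑ b, if i = b then d b else 0 := Finset.sum_le_sum fun b _ => h (σ b) b i
    _ = d i := by rw [Finset.sum_ite_eq]; simp

lemma aux_det_update {n : ℕ} {R : Type*} [CommRing R] (A : Matrix (Fin n) (Fin n) R)
    (c j : Fin n) :
    (A.updateRow c (Pi.single j 1)).det =
      ((A.updateRow c (Pi.single j 1)).updateCol j (Pi.single c 1)).det := by
  rw [Matrix.det_apply', Matrix.det_apply']
  refine Finset.sum_congr rfl fun σ _ => ?_
  by_cases hσ : σ j = c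
  · congr 1
    refine Finset.prod_congr rfl fun b _ => ?_
    by_cases hb : b = j
    · subst hb
      simp [Matrix.updateCol_apply, Matrix.updateRow_apply, hσ]
    · simp [Matrix.updateCol_apply, hb]
  · have hb : σ.symm c ≠ j := fun h => hσ (by rw [← h, Equiv.apply_symm_apply])
    have z1 : (A.updateRow c (Pi.single j 1)) (σ (σ.symm c)) (σ.symm c) = 0 := by
      rw [Equiv.apply_symm_apply]
      simp [Matrix.updateRow_apply, Pi.single_eq_of_ne hb]
    have z2 : ((A.updateRow c (Pi.single j 1)).updateCol j (Pi.single c 1))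
        (σ (σ.symm c)) (σ.symm c) = 0 := by
      rw [Matrix.updateCol_apply, if_neg hb]
      exact z1
    have e1 : ∏ i, (A.updateRow c (Pi.single j 1)) (σ i) i = 0 :=
      Finset.prod_eq_zero (Finset.mem_univ (σ.symm c)) z1
    have e2 : ∏ i, ((A.updateRow c (Pi.single j 1)).updateCol j (Pi.single c 1)) (σ i) i = 0 :=
      Finset.prod_eq_zero (Finset.mem_univ (σ.symm c)) z2
    rw [e1, e2]

lemma aux_degreeOf_one {σ R : Type*} [CommSemiring R] (i : σ) :
    MvPolynomial.degreeOf i (1 : MvPolynomial σ R) = 0 := by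
  rw [← MvPolynomial.C_1]; exact MvPolynomial.degreeOf_C _ _
/-- Lemma 1 of the paper: there exist coefficients `α_k`, `k ∈ {0,1}^n`
(indexed here by subsets `S ⊆ {1,…,n}`), with `α_∅ = 1`, such that for every row
index `j` and every `ℓ ∈ ℕ^n` with `max_i ℓ_i ≥ 2` or `ℓ_j = 1`, one has
`e_jᵀ Ξ_ℓ = −∑_{S ≠ ∅} α_S e_jᵀ Ξ_{ℓ−1_S}`. -/
theorem stmt4 {n : ℕ} (hn : 0 < n) (K : Matrix (Fin n) (Fin n) ℝ)
    (Xi : (Fin n → ℤ) → Matrix (Fin n) (Fin n) ℝ)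
    (hXineg : ∀ ℓ : Fin n → ℤ, (∃ i, ℓ i < 0) → Xi ℓ = 0)
    (hXizero : Xi 0 = 1)
    (hXirec : ∀ ℓ : Fin n → ℤ, (∀ i, 0 ≤ ℓ i) → ℓ ≠ 0 →
      Xi ℓ = ∑ k : Fin n,
        (K * Matrix.single k k (1 : ℝ)) * Xi (fun i => ℓ i - if i = k then 1 else 0)) :
    ∃ α : Finset (Fin n) → ℝ,
      α ∅ = 1 ∧
      ∀ (j : Fin n) (ℓ : Fin n → ℕ),
        ((∃ i, 2 ≤ ℓ i) ∨ ℓ j = 1) →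
        ∀ c : Fin n,
          Xi (fun i => (ℓ i : ℤ)) j c =
            -∑ S ∈ (Finset.univ : Finset (Finset (Fin n))).erase ∅,
              α S * Xi (fun i => (ℓ i : ℤ) - if i ∈ S then 1 else 0) j c := by
  classical
  set Mp : Matrix (Fin n) (Fin n) (MvPolynomial (Fin n) ℝ) :=
    1 - (K.map MvPolynomial.C) * Matrix.diagonal (fun i => MvPolynomial.X i) with hMpdef
  have hMp : ∀ a b, Mp a b =
      (if a = b then 1 else 0) - MvPolynomial.C (K a b) * MvPolynomial.X b := by
    intro a b
    simp [hMpdef, Matrix.sub_apply, Matrix.one_apply, Matrix.mul_diagonal, Matrix.map_apply]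
  have hdeg : ∀ a b i, MvPolynomial.degreeOf i (Mp a b) ≤ if i = b then 1 else 0 := by
    intro a b i
    rw [hMp]
    refine le_trans (MvPolynomial.degreeOf_sub_le _ _ _) (max_le ?_ ?_)
    · split <;> simp [aux_degreeOf_one, MvPolynomial.degreeOf_zero]
    · refine le_trans (MvPolynomial.degreeOf_C_mul_le _ _ _) ?_
      rw [MvPolynomial.degreeOf_X]
  have hdetdeg : ∀ i, MvPolynomial.degreeOf i Mp.det ≤ 1 :=
    aux_det_degreeOf Mp (fun _ => 1) (fun a b i => hdeg a b i)
  have hadjdeg : ∀ j c i, MvPolynomial.degreeOf i (Mp.adjugate j c) ≤ if i = j then 0 else 1 := by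
    intro j c i
    rw [Matrix.adjugate_apply, aux_det_update]
    refine aux_det_degreeOf _ (fun b => if b = j then 0 else 1) ?_ i
    intro a b i'
    by_cases hbj : b = j
    · subst hbj
      rw [Matrix.updateCol_apply, if_pos rfl]
      rcases eq_or_ne a c with h | h
      · subst h; simp [aux_degreeOf_one]
      · simp [Pi.single_eq_of_ne h]
    · rw [Matrix.updateCol_apply, if_neg hbj, Matrix.updateRow_apply]
      rcases eq_or_ne a c with h | h
      · rw [if_pos h, Pi.single_eq_of_ne hbj]
        simp
      · rw [if_neg h]
        refine le_trans (hdeg a b i') ?_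
        simp [hbj]
  -- power series setup
  let Rp := MvPowerSeries (Fin n) ℝ
  let φc : MvPolynomial (Fin n) ℝ →+* Rp := MvPolynomial.coeToMvPowerSeries.ringHom
  let M : Matrix (Fin n) (Fin n) Rp := Mp.map φc
  let Φ : Matrix (Fin n) (Fin n) Rp :=
    Matrix.of fun j c => (fun q => Xi (fun i => (q i : ℤ)) j c : MvPowerSeries (Fin n) ℝ)
  have hΦc : ∀ j c q, MvPowerSeries.coeff q (Φ j c) = Xi (fun i => (q i : ℤ)) j c :=
    fun _ _ _ => rfl
  have hM : ∀ a b, M a b = ((if a = b then 1 else 0) : Rp)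
      - (MvPowerSeries.monomial (Finsupp.single b 1)) (K a b) := by
    intro a b
    show φc (Mp a b) = _
    rw [hMp, map_sub]
    congr 1
    · split <;> simp [φc]
    · have h2 : MvPolynomial.C (K a b) * MvPolynomial.X b
          = MvPolynomial.monomial (Finsupp.single b 1) (K a b) := by
        rw [MvPolynomial.X, MvPolynomial.C_mul_monomial, mul_one]
      rw [h2]
      exact MvPolynomial.coe_monomial _ _
  have hrow : ∀ (ℓ : Fin n →₀ ℕ) a c,
      Xi (fun i => (ℓ i : ℤ)) a c =
        (∑ b, K a b * (if Finsupp.single b 1 ≤ ℓ then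
          Xi (fun i => (((ℓ - Finsupp.single b 1) : Fin n →₀ ℕ) i : ℤ)) b c else 0))
        + (if a = c ∧ ℓ = 0 then 1 else 0) := by
    intro ℓ a c
    by_cases h0 : ℓ = 0
    · subst h0
      have e0 : (fun i => (((0 : Fin n →₀ ℕ) i : ℕ) : ℤ)) = (0 : Fin n → ℤ) := by
        funext i; simp
      have hns : ∀ b : Fin n, ¬ Finsupp.single b 1 ≤ (0 : Fin n →₀ ℕ) := by
        intro b
        simp [Finsupp.single_le_iff]
      rw [e0, hXizero]
      simp [hns, Matrix.one_apply]
    · have hne : (fun i => (ℓ i : ℤ)) ≠ 0 := by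
        intro h
        apply h0
        ext i
        simpa using congrFun h i
      rw [hXirec _ (fun i => Int.natCast_nonneg _) hne, Matrix.sum_apply]
      have hKE : ∀ k, ((K * Matrix.single k k (1:ℝ)) *
          Xi (fun i => (ℓ i : ℤ) - if i = k then 1 else 0)) a c
          = K a k * Xi (fun i => (ℓ i : ℤ) - if i = k then 1 else 0) k c := by
        intro k
        rw [Matrix.mul_apply]
        have h1 : ∀ b, (K * Matrix.single k k (1:ℝ)) a b
            = if k = b then K a k else 0 := by
          intro b
          rw [Matrix.mul_apply]
          by_cases hkb : k = b <;>
            simp [Matrix.single, Matrix.of_apply, hkb, Finset.sum_ite_eq]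
        simp_rw [h1, ite_mul, zero_mul]
        rw [Finset.sum_ite_eq]
        simp
      rw [Finset.sum_congr rfl (fun k _ => hKE k), if_neg (by simp [h0]), add_zero]
      refine Finset.sum_congr rfl fun k _ => ?_
      by_cases h1 : Finsupp.single k 1 ≤ ℓ
      · have harg : (fun i => (((ℓ - Finsupp.single k 1) : Fin n →₀ ℕ) i : ℤ))
            = fun i => (ℓ i : ℤ) - if i = k then 1 else 0 := by
          funext i
          have h2 : Finsupp.single k 1 i ≤ ℓ i := h1 i
          rw [Finsupp.tsub_apply]
          rcases eq_or_ne i k with h | h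
          · subst h
            rw [Finsupp.single_eq_same] at h2
            simp [Nat.cast_sub h2]
          · simp [Finsupp.single_eq_of_ne (Ne.symm h), h]
        rw [if_pos h1, harg]
      · have hk0 : ℓ k = 0 := by
          by_contra h2
          exact h1 (Finsupp.single_le_iff.2 (by omega))
        have hz : Xi (fun i => (ℓ i : ℤ) - if i = k then 1 else 0) = 0 :=
          hXineg _ ⟨k, by simp [hk0]⟩
        rw [if_neg h1, hz]
        simp
  have hMΦ : M * Φ = 1 := by
    ext a c ℓ
    rw [Matrix.mul_apply, map_sum]
    have hterm : ∀ b, MvPowerSeries.coeff ℓ (M a b * Φ b c)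
        = (if a = b then Xi (fun i => (ℓ i : ℤ)) b c else 0)
          - K a b * (if Finsupp.single b 1 ≤ ℓ then
              Xi (fun i => (((ℓ - Finsupp.single b 1) : Fin n →₀ ℕ) i : ℤ)) b c else 0) := by
      intro b
      rw [hM, sub_mul, map_sub]
      congr 1
      · split
        · rw [one_mul, hΦc]
        · rw [zero_mul, map_zero]
      · rw [MvPowerSeries.coeff_monomial_mul]
        split
        · rw [hΦc]
        · rw [mul_zero]
    rw [Finset.sum_congr rfl (fun b _ => hterm b), Finset.sum_sub_distrib,
      Finset.sum_ite_eq]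
    simp only [Finset.mem_univ, if_true]
    rw [hrow ℓ a c, add_sub_cancel_left, Matrix.one_apply]
    by_cases hac : a = c <;> by_cases hl0 : ℓ = 0 <;>
      simp [hac, hl0, MvPowerSeries.coeff_one]
  have hsmul : M.det • Φ = M.adjugate := by
    calc M.det • Φ = (M.det • 1) * Φ := by rw [Matrix.smul_mul, Matrix.one_mul]
      _ = (M.adjugate * M) * Φ := by rw [Matrix.adjugate_mul]
      _ = M.adjugate * (M * Φ) := Matrix.mul_assoc _ _ _
      _ = M.adjugate := by rw [hMΦ, Matrix.mul_one]
  have hdetM : M.det = φc Mp.det := (RingHom.map_det φc Mp).symm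
  have hadjM : M.adjugate = (Mp.adjugate).map φc := by
    have := RingHom.map_adjugate φc Mp
    simpa [RingHom.mapMatrix_apply] using this.symm
  have hcoeff : ∀ (ℓ : Fin n →₀ ℕ) (j c : Fin n),
      (∑ p ∈ Finset.HasAntidiagonal.antidiagonal ℓ, MvPolynomial.coeff p.1 Mp.det *
        Xi (fun i => (p.2 i : ℤ)) j c)
      = MvPolynomial.coeff ℓ (Mp.adjugate j c) := by
    intro ℓ j c
    calc (∑ p ∈ Finset.HasAntidiagonal.antidiagonal ℓ, MvPolynomial.coeff p.1 Mp.det *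
          Xi (fun i => (p.2 i : ℤ)) j c)
        = MvPowerSeries.coeff ℓ ((M.det • Φ) j c) := by
          rw [Matrix.smul_apply, smul_eq_mul, hdetM, MvPowerSeries.coeff_mul]
          refine Finset.sum_congr rfl fun p _ => ?_
          rw [MvPolynomial.coeToMvPowerSeries.ringHom_apply, MvPolynomial.coeff_coe, hΦc]
      _ = MvPowerSeries.coeff ℓ (M.adjugate j c) := by rw [hsmul]
      _ = MvPolynomial.coeff ℓ (Mp.adjugate j c) := by
          rw [hadjM, Matrix.map_apply, MvPolynomial.coeToMvPowerSeries.ringHom_apply,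
            MvPolynomial.coeff_coe]
  set α : Finset (Fin n) → ℝ :=
    fun S => MvPolynomial.coeff (∑ i ∈ S, Finsupp.single i 1) Mp.det with hα
  have honeS : ∀ (S : Finset (Fin n)) (i : Fin n),
      (∑ i' ∈ S, Finsupp.single i' (1:ℕ)) i = if i ∈ S then 1 else 0 := by
    intro S i
    rw [Finset.sum_apply']
    simp [Finsupp.single_apply, Finset.sum_ite_eq']
  have hone : ∀ q : Fin n →₀ ℕ, (∀ i, q i ≤ 1) →
      (∑ i ∈ q.support, Finsupp.single i (1:ℕ)) = q := by
    intro q hq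
    ext i
    rw [honeS]
    have := hq i
    by_cases hi : i ∈ q.support
    · rw [if_pos hi]
      rw [Finsupp.mem_support_iff] at hi
      omega
    · rw [if_neg hi]
      rw [Finsupp.mem_support_iff, not_not] at hi
      omega
  have hα0 : α ∅ = 1 := by
    rw [hα]
    simp only [Finset.sum_empty]
    have h2 : (MvPolynomial.constantCoeff : MvPolynomial (Fin n) ℝ →+* ℝ) Mp.det
        = (Mp.map MvPolynomial.constantCoeff).det := by
      rw [RingHom.map_det]
      rfl
    have h3 : Mp.map (MvPolynomial.constantCoeff : MvPolynomial (Fin n) ℝ →+* ℝ) = 1 := by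
      ext a b
      rw [Matrix.map_apply, hMp, map_sub, _root_.map_mul]
      simp only [MvPolynomial.constantCoeff_C, MvPolynomial.constantCoeff_X, mul_zero]
      rw [Matrix.one_apply]
      split <;> simp
    have : MvPolynomial.coeff (0 : Fin n →₀ ℕ) Mp.det
        = (MvPolynomial.constantCoeff : MvPolynomial (Fin n) ℝ →+* ℝ) Mp.det := by
      rw [MvPolynomial.constantCoeff_eq]
    rw [this, h2, h3, Matrix.det_one]
  refine ⟨α, hα0, ?_⟩
  intro j ℓ hcond c
  set ℓn : Fin n →₀ ℕ := Finsupp.equivFunOnFinite.symm ℓ with hℓndef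
  have hℓni : ∀ i, ℓn i = ℓ i := fun i => rfl
  have hadj0 : MvPolynomial.coeff ℓn (Mp.adjugate j c) = 0 := by
    rcases hcond with ⟨i, hi⟩ | hj
    · refine aux_coeff_zero (lt_of_le_of_lt (hadjdeg j c i) ?_)
      rw [hℓni]
      split <;> omega
    · refine aux_coeff_zero (lt_of_le_of_lt (hadjdeg j c j) ?_)
      rw [hℓni]
      simp [hj]
  have hsum := hcoeff ℓn j c
  rw [hadj0] at hsum
  have hreindex : (∑ p ∈ Finset.HasAntidiagonal.antidiagonal ℓn, MvPolynomial.coeff p.1 Mp.det *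
        Xi (fun i => (p.2 i : ℤ)) j c)
      = ∑ S : Finset (Fin n), α S * Xi (fun i => (ℓ i : ℤ) - if i ∈ S then 1 else 0) j c := by
    have hstep1 : (∑ p ∈ Finset.HasAntidiagonal.antidiagonal ℓn, MvPolynomial.coeff p.1 Mp.det *
          Xi (fun i => (p.2 i : ℤ)) j c)
        = ∑ p ∈ (Finset.HasAntidiagonal.antidiagonal ℓn).filter (fun p => ∀ i, p.1 i ≤ 1),
            MvPolynomial.coeff p.1 Mp.det * Xi (fun i => (p.2 i : ℤ)) j c := by
      refine (Finset.sum_subset (Finset.filter_subset _ _) ?_).symm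
      intro p hp hnp
      rw [Finset.mem_filter] at hnp
      push_neg at hnp
      obtain ⟨i, hi⟩ := hnp hp
      rw [aux_coeff_zero (lt_of_le_of_lt (hdetdeg i) (by omega)), zero_mul]
    have hstep2 : (∑ S : Finset (Fin n),
            α S * Xi (fun i => (ℓ i : ℤ) - if i ∈ S then 1 else 0) j c)
        = ∑ S ∈ Finset.univ.filter (fun S : Finset (Fin n) => ∀ i ∈ S, 1 ≤ ℓ i),
            α S * Xi (fun i => (ℓ i : ℤ) - if i ∈ S then 1 else 0) j c := by
      refine (Finset.sum_subset (Finset.filter_subset _ _) ?_).symm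
      intro S hS hnS
      rw [Finset.mem_filter] at hnS
      push_neg at hnS
      obtain ⟨i, hiS, hi⟩ := hnS hS
      rw [hXineg _ ⟨i, by rw [if_pos hiS]; omega⟩]
      simp
    rw [hstep1, hstep2]
    refine Finset.sum_nbij' (fun p => p.1.support)
      (fun S => (∑ i ∈ S, Finsupp.single i 1, ℓn - ∑ i ∈ S, Finsupp.single i 1))
      ?_ ?_ ?_ ?_ ?_
    · intro p hp
      rw [Finset.mem_filter] at hp ⊢
      obtain ⟨hp1, hp2⟩ := hp
      rw [Finset.HasAntidiagonal.mem_antidiagonal] at hp1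
      refine ⟨Finset.mem_univ _, fun i hi => ?_⟩
      rw [Finsupp.mem_support_iff] at hi
      have h1 : p.1 i + p.2 i = ℓ i := by
        rw [← hℓni, ← hp1, Finsupp.add_apply]
      omega
    · intro S hS
      rw [Finset.mem_filter] at hS ⊢
      have hle : (∑ i ∈ S, Finsupp.single i (1:ℕ)) ≤ ℓn := by
        rw [Finsupp.le_def]
        intro i
        rw [honeS, hℓni]
        split
        · exact hS.2 i (by assumption)
        · omega
      refine ⟨?_, fun i => by rw [honeS]; split <;> omega⟩
      rw [Finset.HasAntidiagonal.mem_antidiagonal]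
      exact add_tsub_cancel_of_le hle
    · intro p hp
      rw [Finset.mem_filter, Finset.HasAntidiagonal.mem_antidiagonal] at hp
      have h1 := hone p.1 hp.2
      have h2 : ℓn - p.1 = p.2 := by
        rw [← hp.1, add_tsub_cancel_left]
      show (∑ i ∈ p.1.support, Finsupp.single i 1,
        ℓn - ∑ i ∈ p.1.support, Finsupp.single i 1) = p
      rw [h1, h2]
    · intro S hS
      show (∑ i' ∈ S, Finsupp.single i' (1:ℕ)).support = S
      ext i
      rw [Finsupp.mem_support_iff, honeS]
      by_cases h : i ∈ S <;> simp [h]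
    · intro p hp
      rw [Finset.mem_filter, Finset.HasAntidiagonal.mem_antidiagonal] at hp
      have h1 := hone p.1 hp.2
      show _ = α p.1.support * _
      rw [hα]
      simp only [h1]
      congr 1
      congr 1
      funext i
      have h2 : p.1 i + p.2 i = ℓ i := by
        rw [← hℓni, ← hp.1, Finsupp.add_apply]
      have h3 : (if i ∈ p.1.support then 1 else 0 : ℤ) = (p.1 i : ℤ) := by
        by_cases h : i ∈ p.1.support
        · rw [if_pos h]
          rw [Finsupp.mem_support_iff] at h
          have := hp.2 i
          omega
        · rw [if_neg h]
          rw [Finsupp.mem_support_iff, not_not] at h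
          omega
      rw [h3]
      omega
  rw [hreindex] at hsum
  rw [← Finset.add_sum_erase _ _ (Finset.mem_univ ∅)] at hsum
  have hemp : (fun i => (ℓ i : ℤ) - if i ∈ (∅ : Finset (Fin n)) then 1 else 0)
      = fun i => (ℓ i : ℤ) := by
    funext i
    simp
  rw [hemp, hα0, one_mul] at hsum
  linarith
end

section
/- Let K ∈ M_{n,n}(ℝ) and define Ξ_ℓ as usual, and α_k, M_ℓ as the coefficient matrices of det(I_n − K diag(t)) and Adj(I_n − K diag(t)). Then for every ℓ ∈ ℕ^n one has Σ_{k ∈ {0,1}^n} α_k Ξ_{ℓ−k} = M_ℓ if ℓ ∈ {0,1}^n, and Σ_{k ∈ {0,1}^n} α_k Ξ_{ℓ−k} = 0 otherwise (where Ξ_m = 0 for m ∉ ℕ^n). -/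
open Matrix Finset

namespace Stmt5Aux
open Matrix Finset MvPolynomial
variable {n : ℕ}

noncomputable def dS (S : Finset (Fin n)) : Fin n →₀ ℕ := ∑ m ∈ S, Finsupp.single m 1

lemma dS_apply (S : Finset (Fin n)) (m : Fin n) : dS S m = if m ∈ S then 1 else 0 := by
  classical
  simp only [dS, Finsupp.finset_sum_apply, Finsupp.single_apply]
  simp [Finset.sum_ite_eq' S m (fun _ => 1)]

lemma dS_inj {S T : Finset (Fin n)} (h : dS S = dS T) : S = T := by
  ext m
  have := congrArg (fun f => f m) h
  simp only [dS_apply] at this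
  by_cases hS : m ∈ S <;> by_cases hT : m ∈ T <;> simp_all

lemma prod_pow_dS (S : Finset (Fin n)) (x : Fin n → ℝ) :
    (dS S).prod (fun i e => x i ^ e) = ∏ m ∈ S, x m := by
  classical
  induction S using Finset.induction with
  | empty => simp [dS]
  | insert a s h ih =>
    rw [dS, Finset.sum_insert h, Finsupp.prod_add_index' (fun _ => pow_zero _) (fun _ _ _ => pow_add _ _ _)]
    rw [Finset.prod_insert h, ← dS, ih]
    congr 1
    simp [Finsupp.prod_single_index]

lemma single_add_dS_eq_dS_iff (k : Fin n) (S T : Finset (Fin n)) :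
    Finsupp.single k 1 + dS S = dS T ↔ k ∈ T ∧ S = T.erase k := by
  constructor
  · intro h
    have hk := congrArg (fun f => f k) h
    simp only [Finsupp.add_apply, Finsupp.single_apply, if_pos rfl, dS_apply] at hk
    have hkT : k ∈ T := by by_cases h1 : k ∈ S <;> by_cases h2 : k ∈ T <;> simp_all
    have hkS : k ∉ S := by by_cases h1 : k ∈ S <;> simp_all
    refine ⟨hkT, ?_⟩
    ext m
    have hm := congrArg (fun f => f m) h
    simp only [Finsupp.add_apply, Finsupp.single_apply, dS_apply] at hm
    by_cases hmk : m = k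
    · subst hmk; simp [hkS, Finset.mem_erase]
    · rw [if_neg (fun h' => hmk h'.symm)] at hm
      simp only [Finset.mem_erase, hmk, ne_eq, not_false_iff, true_and]
      by_cases h1 : m ∈ S <;> by_cases h2 : m ∈ T <;> simp_all
  · rintro ⟨hkT, rfl⟩
    ext m
    simp only [Finsupp.add_apply, Finsupp.single_apply, dS_apply, Finset.mem_erase]
    by_cases hmk : m = k
    · subst hmk; simp [hkT]
    · rw [if_neg (fun h' => hmk h'.symm)]
      simp [hmk]

lemma single_add_dS_eq_single_add_dS_iff (k : Fin n) (S : Finset (Fin n)) (hk : k ∈ S)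
    (k' : Fin n) (S' : Finset (Fin n)) :
    Finsupp.single k' 1 + dS S' = Finsupp.single k 1 + dS S ↔ k' = k ∧ S' = S := by
  constructor
  · intro h
    have hkv := congrArg (fun f => f k) h
    simp only [Finsupp.add_apply, Finsupp.single_apply, dS_apply, if_pos rfl, if_pos hk] at hkv
    have hk'k : k' = k := by
      by_contra hne
      rw [if_neg hne] at hkv
      by_cases h1 : k ∈ S' <;> simp_all
    subst hk'k
    refine ⟨rfl, dS_inj (add_left_cancel h)⟩
  · rintro ⟨rfl, rfl⟩; rfl

lemma dS_ne_single_add_dS (k : Fin n) (S : Finset (Fin n)) (hk : k ∈ S) (T : Finset (Fin n)) :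
    dS T ≠ Finsupp.single k 1 + dS S := by
  intro h
  have := congrArg (fun f => f k) h
  simp only [Finsupp.add_apply, Finsupp.single_apply, dS_apply, if_pos rfl, if_pos hk] at this
  by_cases h1 : k ∈ T <;> simp_all


lemma dS_eq_iff {S T : Finset (Fin n)} : dS S = dS T ↔ S = T :=
  ⟨dS_inj, by rintro rfl; rfl⟩

lemma diagonal_eq_sum (x : Fin n → ℝ) :
    Matrix.diagonal x = ∑ k, (x k) • Matrix.single k k (1:ℝ) := by
  ext i j
  simp only [Matrix.sum_apply, Matrix.smul_apply, Matrix.single, Matrix.diagonal_apply,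
    Matrix.of_apply, smul_eq_mul, mul_ite, mul_one, mul_zero]
  by_cases h : i = j
  · subst h; simp
  · rw [if_neg h, Finset.sum_eq_zero]
    intro k _
    rw [if_neg]
    rintro ⟨rfl, rfl⟩; exact h rfl

variable (K : Matrix (Fin n) (Fin n) ℝ) (α : Finset (Fin n) → ℝ)
  (M : Finset (Fin n) → Matrix (Fin n) (Fin n) ℝ)

lemma hmain
    (hα : ∀ t : Fin n → ℝ,
      (1 - K * Matrix.diagonal t).det = ∑ S : Finset (Fin n), α S * ∏ i ∈ S, t i)
    (hM : ∀ t : Fin n → ℝ,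
      (1 - K * Matrix.diagonal t).adjugate = ∑ S : Finset (Fin n), (∏ i ∈ S, t i) • M S)
    (x : Fin n → ℝ) :
    (∑ S : Finset (Fin n), (∏ m ∈ S, x m) • M S)
      - ∑ k : Fin n, ∑ S : Finset (Fin n),
          (x k * ∏ m ∈ S, x m) • (K * Matrix.single k k 1 * M S)
    = ∑ S : Finset (Fin n), (α S * ∏ m ∈ S, x m) • (1 : Matrix (Fin n) (Fin n) ℝ) := by
  have h0 := Matrix.mul_adjugate (1 - K * Matrix.diagonal x)
  rw [hM x, hα x] at h0
  rw [sub_mul, one_mul] at h0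
  rw [Finset.sum_smul] at h0
  rw [← h0]
  congr 1
  rw [diagonal_eq_sum, Finset.mul_sum, Finset.sum_comm]
  refine Finset.sum_congr rfl fun S _ => ?_
  rw [Finset.mul_sum, Finset.sum_mul]
  refine Finset.sum_congr rfl fun k _ => ?_
  simp only [mul_smul_comm, smul_mul_assoc, smul_smul]
  rw [mul_comm]


lemma prod_single_one_pow (x : Fin n → ℝ) (k : Fin n) :
    ((Finsupp.single k (1:ℕ)).prod fun i e => x i ^ e) = x k := by
  simp [Finsupp.prod_single_index]

lemma hpoly
    (hα : ∀ t : Fin n → ℝ,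
      (1 - K * Matrix.diagonal t).det = ∑ S : Finset (Fin n), α S * ∏ i ∈ S, t i)
    (hM : ∀ t : Fin n → ℝ,
      (1 - K * Matrix.diagonal t).adjugate = ∑ S : Finset (Fin n), (∏ i ∈ S, t i) • M S)
    (i j : Fin n) :
    (∑ S : Finset (Fin n), (monomial (dS S) (M S i j) : MvPolynomial (Fin n) ℝ))
      - ∑ k : Fin n, ∑ S : Finset (Fin n),
          monomial (Finsupp.single k 1 + dS S)
            ((K * Matrix.single k k 1 * M S : Matrix (Fin n) (Fin n) ℝ) i j)
    = ∑ S : Finset (Fin n), monomial (dS S) (α S * (1 : Matrix (Fin n) (Fin n) ℝ) i j) := by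
  apply MvPolynomial.funext
  intro x
  have h := congrFun (congrFun (hmain K α M hα hM x) i) j
  simp only [Matrix.sub_apply, Matrix.sum_apply, Matrix.smul_apply, smul_eq_mul] at h
  simp only [map_sub, map_sum, eval_monomial, prod_pow_dS,
    Finsupp.prod_add_index' (fun _ => pow_zero _) (fun _ _ _ => pow_add _ _ _),
    prod_single_one_pow]
  simp only [mul_comm, mul_left_comm, mul_assoc] at h ⊢
  exact h

lemma R2
    (hα : ∀ t : Fin n → ℝ,
      (1 - K * Matrix.diagonal t).det = ∑ S : Finset (Fin n), α S * ∏ i ∈ S, t i)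
    (hM : ∀ t : Fin n → ℝ,
      (1 - K * Matrix.diagonal t).adjugate = ∑ S : Finset (Fin n), (∏ i ∈ S, t i) • M S)
    (S : Finset (Fin n)) (k : Fin n) (hk : k ∈ S) :
    K * Matrix.single k k 1 * M S = 0 := by
  ext i j
  have h := congrArg (coeff (Finsupp.single k 1 + dS S)) (hpoly K α M hα hM i j)
  simp only [coeff_sub, coeff_sum, coeff_monomial] at h
  rw [Finset.sum_eq_zero (fun T _ => if_neg (dS_ne_single_add_dS k S hk T)),
    Finset.sum_eq_zero (fun T _ => if_neg (dS_ne_single_add_dS k S hk T))] at h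
  simp only [single_add_dS_eq_single_add_dS_iff k S hk] at h
  have h2 : ∀ k' : Fin n, (∑ S' : Finset (Fin n),
      if k' = k ∧ S' = S then (K * Matrix.single k' k' 1 * M S' : Matrix (Fin n) (Fin n) ℝ) i j else 0)
      = if k' = k then (K * Matrix.single k k 1 * M S : Matrix (Fin n) (Fin n) ℝ) i j else 0 := by
    intro k'
    by_cases hk' : k' = k
    · subst hk'; simp [Finset.sum_ite_eq']
    · simp [hk']
  rw [Finset.sum_congr rfl (fun k' _ => h2 k')] at h
  simp [Finset.sum_ite_eq, Finset.sum_ite_eq'] at h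
  simpa using h

lemma R1
    (hα : ∀ t : Fin n → ℝ,
      (1 - K * Matrix.diagonal t).det = ∑ S : Finset (Fin n), α S * ∏ i ∈ S, t i)
    (hM : ∀ t : Fin n → ℝ,
      (1 - K * Matrix.diagonal t).adjugate = ∑ S : Finset (Fin n), (∏ i ∈ S, t i) • M S)
    (T : Finset (Fin n)) :
    M T = α T • (1 : Matrix (Fin n) (Fin n) ℝ)
      + ∑ k ∈ T, K * Matrix.single k k 1 * M (T.erase k) := by
  ext i j
  have h := congrArg (coeff (dS T)) (hpoly K α M hα hM i j)
  simp only [coeff_sub, coeff_sum, coeff_monomial, dS_eq_iff] at h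
  rw [Finset.sum_ite_eq' Finset.univ T (fun S => M S i j)] at h
  rw [Finset.sum_ite_eq' Finset.univ T (fun S => α S * (1 : Matrix (Fin n) (Fin n) ℝ) i j)] at h
  simp only [Finset.mem_univ, if_true] at h
  have h2 : ∀ k : Fin n, (∑ S' : Finset (Fin n),
      if Finsupp.single k 1 + dS S' = dS T
        then (K * Matrix.single k k 1 * M S' : Matrix (Fin n) (Fin n) ℝ) i j else 0)
      = if k ∈ T then (K * Matrix.single k k 1 * M (T.erase k) : Matrix (Fin n) (Fin n) ℝ) i j else 0 := by
    intro k
    simp only [single_add_dS_eq_dS_iff]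
    by_cases hk : k ∈ T
    · simp [hk, Finset.sum_ite_eq']
    · simp [hk]
  rw [Finset.sum_congr rfl (fun k _ => h2 k)] at h
  rw [Finset.sum_ite_mem] at h
  simp only [Finset.univ_inter] at h
  simp only [Matrix.add_apply, Matrix.smul_apply, Matrix.sum_apply, smul_eq_mul]
  linarith [h]

end Stmt5Aux

/-- with `α` and `M` the coefficients of the multilinear expansions of
`det(I − K diag t)` and `Adj(I − K diag t)`, for every `ℓ ∈ ℕ^n` one has
`∑_{k ∈ {0,1}^n} α_k Ξ_{ℓ−k} = M_ℓ` if `ℓ ∈ {0,1}^n` and `= 0` otherwise. -/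
theorem stmt5 {n : ℕ} (hn : 0 < n) (K : Matrix (Fin n) (Fin n) ℝ)
    (Xi : (Fin n → ℤ) → Matrix (Fin n) (Fin n) ℝ)
    (hXineg : ∀ ℓ : Fin n → ℤ, (∃ i, ℓ i < 0) → Xi ℓ = 0)
    (hXizero : Xi 0 = 1)
    (hXirec : ∀ ℓ : Fin n → ℤ, (∀ i, 0 ≤ ℓ i) → ℓ ≠ 0 →
      Xi ℓ = ∑ k : Fin n,
        (K * Matrix.single k k (1 : ℝ)) * Xi (fun i => ℓ i - if i = k then 1 else 0))
    (α : Finset (Fin n) → ℝ)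
    (hα : ∀ t : Fin n → ℝ,
      (1 - K * Matrix.diagonal t).det = ∑ S : Finset (Fin n), α S * ∏ i ∈ S, t i)
    (M : Finset (Fin n) → Matrix (Fin n) (Fin n) ℝ)
    (hM : ∀ t : Fin n → ℝ,
      (1 - K * Matrix.diagonal t).adjugate = ∑ S : Finset (Fin n), (∏ i ∈ S, t i) • M S) :
    ∀ ℓ : Fin n → ℕ,
      (∑ S : Finset (Fin n),
          α S • Xi (fun i => (ℓ i : ℤ) - if i ∈ S then 1 else 0)) =
        if ∀ i, ℓ i ≤ 1 then M {i | ℓ i = 1} else 0 := by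
  classical
  have hR1 := Stmt5Aux.R1 K α M hα hM
  have hR2 := Stmt5Aux.R2 K α M hα hM
  suffices H : ∀ N : ℕ, ∀ ℓ : Fin n → ℕ, (∑ i, ℓ i) = N →
      (∑ S : Finset (Fin n),
          α S • Xi (fun i => (ℓ i : ℤ) - if i ∈ S then 1 else 0)) =
        if ∀ i, ℓ i ≤ 1 then M {i | ℓ i = 1} else 0 by
    intro ℓ; exact H _ ℓ rfl
  intro N
  induction N using Nat.strong_induction_on with
  | _ N IH =>
  intro ℓ hN
  by_cases h0 : ∀ i, ℓ i = 0
  · -- base case ℓ = 0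
    have hemp : ({i | ℓ i = 1} : Finset (Fin n)) = ∅ := by
      ext i; simp [h0 i]
    rw [Finset.sum_eq_single (∅ : Finset (Fin n))]
    · have harg : (fun i => (ℓ i : ℤ) - if i ∈ (∅ : Finset (Fin n)) then 1 else 0) = 0 := by
        funext i; simp [h0 i]
      rw [harg, hXizero, if_pos (fun i => by rw [h0 i]; norm_num), hemp, hR1 ∅]
      simp
    · intro S _ hS
      obtain ⟨i, hi⟩ := Finset.nonempty_iff_ne_empty.mpr hS
      rw [hXineg _ ⟨i, by simp [h0 i, hi]⟩, smul_zero]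
    · intro h; exact absurd (Finset.mem_univ _) h
  · -- inductive step
    -- per-S decomposition
    have step : ∀ S : Finset (Fin n),
        α S • Xi (fun i => (ℓ i : ℤ) - if i ∈ S then 1 else 0)
        = (if (∀ i, ℓ i ≤ 1) ∧ S = ({i | ℓ i = 1} : Finset (Fin n))
            then α S • (1 : Matrix (Fin n) (Fin n) ℝ) else 0)
          + ∑ k : Fin n, α S • ((K * Matrix.single k k (1:ℝ)) *
              Xi (fun i => ((ℓ i : ℤ) - if i ∈ S then 1 else 0) - if i = k then 1 else 0)) := by
      intro S
      by_cases hsub : ∀ i ∈ S, 1 ≤ ℓ i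
      · by_cases hveq : (fun i => (ℓ i : ℤ) - if i ∈ S then 1 else 0) = 0
        · -- ℓ is the indicator of S
          have hval : ∀ i, (ℓ i : ℤ) = if i ∈ S then 1 else 0 := by
            intro i
            have := congrFun hveq i
            simp only [Pi.zero_apply, sub_eq_zero] at this
            exact this
          have hcond : (∀ i, ℓ i ≤ 1) ∧ S = ({i | ℓ i = 1} : Finset (Fin n)) := by
            constructor
            · intro i
              have := hval i
              by_cases h : i ∈ S <;> simp [h] at this <;> omega
            · ext i
              have := hval i
              by_cases h : i ∈ S <;> simp [h] at this <;> simp [h, this] <;> try omega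
          rw [hveq, hXizero, if_pos hcond]
          have hzero : ∀ k : Fin n,
              α S • ((K * Matrix.single k k (1:ℝ)) *
                Xi (fun i => ((ℓ i : ℤ) - if i ∈ S then 1 else 0) - if i = k then 1 else 0)) = 0 := by
            intro k
            rw [hXineg _ ⟨k, by rw [hval k]; simp⟩, mul_zero, smul_zero]
          rw [Finset.sum_eq_zero (fun k _ => hzero k), add_zero]
        · -- recursion applies
          have hnneg : ∀ i, 0 ≤ (ℓ i : ℤ) - if i ∈ S then 1 else 0 := by
            intro i
            by_cases h : i ∈ S
            · have := hsub i h; simp [h]; omega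
            · simp [h]
          rw [hXirec _ hnneg hveq, Finset.smul_sum]
          rw [if_neg, zero_add]
          rintro ⟨hle, rfl⟩
          apply hveq
          funext i
          have hl := hle i
          by_cases h : i ∈ ({i | ℓ i = 1} : Finset (Fin n))
          · simp only [Finset.mem_filter, Finset.mem_univ, true_and] at h
            simp [h]
          · simp only [Finset.mem_filter, Finset.mem_univ, true_and] at h
            have : ℓ i = 0 := by omega
            simp [this, h]
      · -- some i ∈ S has ℓ i = 0
        push_neg at hsub
        obtain ⟨i, hiS, hi0⟩ := hsub
        have hi0' : ℓ i = 0 := by omega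
        rw [hXineg _ ⟨i, by simp [hi0', hiS]⟩, smul_zero]
        rw [if_neg, Finset.sum_eq_zero, add_zero]
        · intro k _
          rw [hXineg _ ⟨i, by simp [hi0', hiS]; split <;> norm_num⟩, mul_zero, smul_zero]
        · rintro ⟨hle, rfl⟩
          simp only [Finset.mem_filter, Finset.mem_univ, true_and] at hiS
          omega
    rw [Finset.sum_congr rfl (fun S _ => step S), Finset.sum_add_distrib]
    have hfirst : (∑ S : Finset (Fin n),
        if (∀ i, ℓ i ≤ 1) ∧ S = ({i | ℓ i = 1} : Finset (Fin n))
          then α S • (1 : Matrix (Fin n) (Fin n) ℝ) else 0)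
        = if (∀ i, ℓ i ≤ 1) then α ({i | ℓ i = 1} : Finset (Fin n)) • (1 : Matrix (Fin n) (Fin n) ℝ)
          else 0 := by
      by_cases hle : ∀ i, ℓ i ≤ 1 <;> simp [hle, Finset.sum_ite_eq']
    rw [hfirst, Finset.sum_comm]
    have hksum : ∀ k : Fin n,
        (∑ S : Finset (Fin n), α S • ((K * Matrix.single k k (1:ℝ)) *
            Xi (fun i => ((ℓ i : ℤ) - if i ∈ S then 1 else 0) - if i = k then 1 else 0)))
        = (K * Matrix.single k k (1:ℝ)) *
            (if ℓ k = 0 then 0 else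
              (if ∀ i, (ℓ i - if i = k then 1 else 0) ≤ 1
                then M {i | (ℓ i - if i = k then 1 else 0) = 1} else 0)) := by
      intro k
      by_cases hk0 : ℓ k = 0
      · rw [if_pos hk0, mul_zero, Finset.sum_eq_zero]
        intro S _
        rw [hXineg _ ⟨k, by simp [hk0]; split <;> norm_num⟩, mul_zero, smul_zero]
      · rw [if_neg hk0]
        have hcast : ∀ S : Finset (Fin n),
            (fun i => ((ℓ i : ℤ) - if i ∈ S then 1 else 0) - if i = k then 1 else 0)
            = (fun i => (((ℓ i - if i = k then 1 else 0 : ℕ) : ℤ)) - if i ∈ S then 1 else 0) := by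
          intro S; funext i
          by_cases h : i = k
          · subst h
            rw [if_pos rfl, if_pos rfl, Nat.cast_sub (show 1 ≤ ℓ i by omega)]
            ring
          · simp [h]
        have hlt : (∑ i, (ℓ i - if i = k then 1 else 0)) < N := by
          rw [← hN]
          apply Finset.sum_lt_sum
          · intro i _; split <;> omega
          · exact ⟨k, Finset.mem_univ k, by simp; omega⟩
        have hIH := IH _ hlt (fun i => ℓ i - if i = k then 1 else 0) rfl
        beta_reduce at hIH
        rw [Finset.sum_congr rfl (fun S _ => by rw [hcast S])]
        rw [Finset.sum_congr rfl
          (fun S _ => (mul_smul_comm (α S) (K * Matrix.single k k (1:ℝ)) _).symm),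
          ← Finset.mul_sum, hIH]
    rw [Finset.sum_congr rfl (fun k _ => hksum k)]
    by_cases hle : ∀ i, ℓ i ≤ 1
    · rw [if_pos hle]
      have hterm : ∀ k : Fin n,
          (K * Matrix.single k k (1:ℝ)) *
            (if ℓ k = 0 then 0 else
              (if ∀ i, (ℓ i - if i = k then 1 else 0) ≤ 1
                then M {i | (ℓ i - if i = k then 1 else 0) = 1} else 0))
          = if k ∈ ({i | ℓ i = 1} : Finset (Fin n))
              then (K * Matrix.single k k (1:ℝ)) *
                M (({i | ℓ i = 1} : Finset (Fin n)).erase k) else 0 := by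
        intro k
        by_cases hk0 : ℓ k = 0
        · rw [if_pos hk0, mul_zero, if_neg (by simp [hk0])]
        · have hk1 : ℓ k = 1 := by have := hle k; omega
          have hfa : ∀ i, (ℓ i - if i = k then 1 else 0) ≤ 1 := by
            intro i; have := hle i; split <;> omega
          have hmemk : k ∈ ({i | ℓ i = 1} : Finset (Fin n)) := by simp [hk1]
          have hset : ({i | (ℓ i - if i = k then 1 else 0) = 1} : Finset (Fin n))
              = ({i | ℓ i = 1} : Finset (Fin n)).erase k := by
            ext i
            by_cases h : i = k
            · subst h; simp [hk1]
            · simp [h]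
          rw [if_neg hk0, if_pos hfa, hset, if_pos hmemk]
      rw [Finset.sum_congr rfl (fun k _ => hterm k), Finset.sum_ite_mem, Finset.univ_inter]
      rw [if_pos hle, hR1 ({i | ℓ i = 1} : Finset (Fin n))]
    · rw [if_neg hle, if_neg hle, zero_add]
      apply Finset.sum_eq_zero
      intro k _
      by_cases hk0 : ℓ k = 0
      · rw [if_pos hk0, mul_zero]
      · rw [if_neg hk0]
        by_cases hle' : ∀ i, (ℓ i - if i = k then 1 else 0) ≤ 1
        · rw [if_pos hle']
          push_neg at hle
          obtain ⟨j, hj⟩ := hle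
          have hjk : j = k := by
            by_contra hne
            have := hle' j
            simp [hne] at this
            omega
          subst hjk
          have hk2 : ℓ j = 2 := by
            have := hle' j
            simp at this
            omega
          have hmem : j ∈ ({i | (ℓ i - if i = j then 1 else 0) = 1} : Finset (Fin n)) := by
            simp [hk2]
          exact hR2 _ j hmem
        · rw [if_neg hle', mul_zero]
end

section
/- Let τ_1,...,τ_n > 0, K ∈ M_{n,n}(ℝ), and define H(p) = diag(e^{pτ_1},...,e^{pτ_n}) − K for p ∈ ℂ. If (p_k)_{k∈ℕ} ⊂ ℂ satisfies Re(p_k) → +∞, then det(H(p_k) H(p_k)* + B B*) → +∞ for any fixed B ∈ M_{n,m}(ℝ). In particular, for any sequence (p_k) along which det(H(p_k)H(p_k)* + BB*) → 0, the real parts Re(p_k) are bounded from above. -/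
open Matrix Filter Topology

lemma key {n m : ℕ} (hn : 0 < n) (τ : Fin n → ℝ) (hτ : ∀ i, 0 < τ i)
    (K : Matrix (Fin n) (Fin n) ℝ) (B : Matrix (Fin n) (Fin m) ℝ)
    (p : ℕ → ℂ) (hp : Tendsto (fun k => (p k).re) atTop atTop) :
    Tendsto (fun k => ‖
        ((((Matrix.diagonal fun i => Complex.exp (p k * (τ i : ℂ))) - K.map Complex.ofReal) *
          ((Matrix.diagonal fun i => Complex.exp (p k * (τ i : ℂ))) - K.map Complex.ofReal)ᴴ +
          B.map Complex.ofReal * (B.map Complex.ofReal)ᴴ).det)‖) atTop atTop := by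
  set K' : Matrix (Fin n) (Fin n) ℂ := K.map Complex.ofReal with hK'
  set B' : Matrix (Fin n) (Fin m) ℂ := B.map Complex.ofReal with hB'
  set D : ℕ → Matrix (Fin n) (Fin n) ℂ :=
    fun k => Matrix.diagonal fun i => Complex.exp (p k * (τ i : ℂ)) with hD
  set E : ℕ → Matrix (Fin n) (Fin n) ℂ :=
    fun k => Matrix.diagonal fun i => Complex.exp (-(p k) * (τ i : ℂ)) with hE
  have hDE : ∀ k, D k * E k = 1 := by
    intro k
    rw [hD, hE, diagonal_mul_diagonal]
    have h : (fun i => Complex.exp (p k * (τ i : ℂ)) * Complex.exp (-(p k) * (τ i : ℂ)))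
        = fun _ => (1 : ℂ) := by
      funext i
      rw [← Complex.exp_add, neg_mul, add_neg_cancel, Complex.exp_zero]
    rw [h]
    exact diagonal_one
  set N : ℕ → Matrix (Fin n) (Fin n) ℂ :=
    fun k => (1 - E k * K') * (1 - E k * K')ᴴ + (E k * B') * (E k * B')ᴴ with hN
  have hM : ∀ k, (D k - K') * (D k - K')ᴴ + B' * B'ᴴ = D k * N k * (D k)ᴴ := by
    intro k
    have h1 : D k - K' = D k * (1 - E k * K') := by
      rw [Matrix.mul_sub, mul_one, ← Matrix.mul_assoc, hDE, Matrix.one_mul]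
    have h2 : B' = D k * (E k * B') := by
      rw [← Matrix.mul_assoc, hDE, Matrix.one_mul]
    rw [hN]
    calc (D k - K') * (D k - K')ᴴ + B' * B'ᴴ
        = D k * (1 - E k * K') * (D k * (1 - E k * K'))ᴴ
          + D k * (E k * B') * (D k * (E k * B'))ᴴ := by rw [← h1, ← h2]
      _ = D k * ((1 - E k * K') * (1 - E k * K')ᴴ + (E k * B') * (E k * B')ᴴ) * (D k)ᴴ := by
          rw [conjTranspose_mul, conjTranspose_mul, Matrix.mul_add, Matrix.add_mul]
          simp only [Matrix.mul_assoc]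
  -- abs det D
  set S : ℝ := ∑ i, τ i with hS
  have hSpos : 0 < S := Finset.sum_pos (fun i _ => hτ i) (Finset.univ_nonempty_iff.2 ⟨⟨0, hn⟩⟩)
  have habsD : ∀ k, ‖(D k).det‖ = Real.exp ((p k).re * S) := by
    intro k
    rw [hD, det_diagonal]
    rw [norm_prod]
    simp only [Complex.norm_exp]
    rw [← Real.exp_sum]
    congr 1
    rw [Finset.mul_sum]
    congr 1; funext i
    simp [Complex.mul_re]
  -- N tends to 1
  have hE0 : Tendsto E atTop (𝓝 0) := by
    refine tendsto_pi_nhds.2 ?_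
    intro i
    refine tendsto_pi_nhds.2 ?_
    intro j
    by_cases hij : i = j
    · subst hij
      simp only [hE, diagonal_apply_eq, Matrix.zero_apply]
      rw [tendsto_zero_iff_norm_tendsto_zero]
      have : ∀ k, ‖Complex.exp (-(p k) * (τ i : ℂ))‖ = Real.exp (-((p k).re * τ i)) := by
        intro k
        rw [Complex.norm_exp]
        congr 1
        simp [Complex.mul_re]
      simp only [this]
      apply Real.tendsto_exp_atBot.comp
      apply tendsto_neg_atBot_iff.2
      exact hp.atTop_mul_const (hτ i)
    · simp only [hE, Matrix.zero_apply, diagonal_apply_ne _ hij]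
      exact tendsto_const_nhds
  have hNcont : Continuous (fun X : Matrix (Fin n) (Fin n) ℂ =>
      (1 - X * K') * (1 - X * K')ᴴ + (X * B') * (X * B')ᴴ) := by
    have h1 : Continuous (fun X : Matrix (Fin n) (Fin n) ℂ => 1 - X * K') :=
      continuous_const.sub (continuous_id.matrix_mul continuous_const)
    have h2 : Continuous (fun X : Matrix (Fin n) (Fin n) ℂ => X * B') :=
      continuous_id.matrix_mul continuous_const
    exact (h1.matrix_mul h1.matrix_conjTranspose).add (h2.matrix_mul h2.matrix_conjTranspose)
  have hN1 : Tendsto (fun k => (N k).det) atTop (𝓝 1) := by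
    have : Tendsto N atTop (𝓝 1) := by
      have h0 : (1 - (0 : Matrix (Fin n) (Fin n) ℂ) * K') *
            (1 - (0 : Matrix (Fin n) (Fin n) ℂ) * K')ᴴ
          + ((0 : Matrix (Fin n) (Fin n) ℂ) * B') *
            ((0 : Matrix (Fin n) (Fin n) ℂ) * B')ᴴ = 1 := by simp
      have h := (hNcont.tendsto 0).comp hE0
      rw [h0] at h
      exact h
    have h := ((continuous_id.matrix_det).tendsto (1 : Matrix (Fin n) (Fin n) ℂ)).comp this
    simpa [Function.comp_def] using h
  have hNabs : Tendsto (fun k => ‖(N k).det‖) atTop (𝓝 1) := by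
    have := (continuous_norm.tendsto 1).comp hN1
    simpa [Function.comp_def] using this
  have habs : ∀ k, ‖((D k - K') * (D k - K')ᴴ + B' * B'ᴴ).det‖
      = Real.exp ((p k).re * S) * Real.exp ((p k).re * S) * ‖(N k).det‖ := by
    intro k
    rw [hM k, det_mul, det_mul, det_conjTranspose, norm_mul, norm_mul]
    have hs : ‖star (D k).det‖ = ‖(D k).det‖ := norm_star _
    rw [hs, habsD k]
    ring
  refine Tendsto.congr (fun k => (habs k).symm) ?_
  apply Tendsto.atTop_mul_pos zero_lt_one _ hNabs
  exact Tendsto.atTop_mul_atTop₀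
    ((Real.tendsto_exp_atTop).comp (hp.atTop_mul_const hSpos))
    ((Real.tendsto_exp_atTop).comp (hp.atTop_mul_const hSpos))


/-- if `Re p_k → +∞` then `det(H(p_k)H(p_k)* + BB*) → +∞`; in
particular along any sequence where this determinant tends to `0`, the real parts
`Re p_k` are bounded from above. -/
theorem stmt6 {n m : ℕ} (hn : 0 < n) (τ : Fin n → ℝ) (hτ : ∀ i, 0 < τ i)
    (K : Matrix (Fin n) (Fin n) ℝ) (B : Matrix (Fin n) (Fin m) ℝ)
    (H : ℂ → Matrix (Fin n) (Fin n) ℂ)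
    (hH : ∀ p, H p = Matrix.diagonal (fun i => Complex.exp (p * (τ i : ℂ))) -
      K.map (Complex.ofReal))
    (p : ℕ → ℂ) :
    (Tendsto (fun k => (p k).re) atTop atTop →
      Tendsto (fun k => ‖
          ((H (p k) * (H (p k))ᴴ +
            B.map (Complex.ofReal) * (B.map (Complex.ofReal))ᴴ).det)‖)
        atTop atTop) ∧
    (Tendsto (fun k =>
          (H (p k) * (H (p k))ᴴ +
            B.map (Complex.ofReal) * (B.map (Complex.ofReal))ᴴ).det)
        atTop (𝓝 0) →
      ∃ C : ℝ, ∀ k, (p k).re ≤ C) := by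
  constructor
  · intro hp
    simp only [hH]
    exact key hn τ hτ K B p hp
  · intro hdet
    by_contra hc
    push_neg at hc
    choose φ hφ using hc
    have hqre : Tendsto (fun j : ℕ => (p (φ (j : ℝ))).re) atTop atTop :=
      tendsto_atTop_mono (fun j => (hφ (j : ℝ)).le) tendsto_natCast_atTop_atTop
    have h1 := key hn τ hτ K B (fun j : ℕ => p (φ (j : ℝ))) hqre
    have habs0 : Tendsto (fun k => ‖(H (p k) * (H (p k))ᴴ +
        B.map Complex.ofReal * (B.map Complex.ofReal)ᴴ).det‖) atTop (𝓝 0) := by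
      have h := (continuous_norm.tendsto 0).comp hdet
      simpa [Function.comp_def] using h
    obtain ⟨M0, hM0⟩ := habs0.bddAbove_range
    obtain ⟨j, hj⟩ := (h1.eventually_ge_atTop (M0 + 1)).exists
    have hle : ‖(H (p (φ (j : ℝ))) * (H (p (φ (j : ℝ))))ᴴ +
        B.map Complex.ofReal * (B.map Complex.ofReal)ᴴ).det‖ ≤ M0 :=
      hM0 (Set.mem_range_self (φ ((j : ℕ) : ℝ)))
    rw [hH] at hle
    linarith
end

section
/- Let H(p) = diag(e^{pτ_1},...,e^{pτ_n}) − K with τ_i > 0. If there exists α > 0 such that for every p ∈ ℂ, inf{ ‖g^T H(p)‖ + ‖g^T B‖ : ‖g‖ = 1 } ≥ α, then rank [K, B] = n. -/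
open Matrix

/-- if the Hautus quantity `‖gᵀH(p)‖ + `‖gᵀB‖` ... -/
theorem stmt9 {n m : ℕ} (hn : 0 < n) (τ : Fin n → ℝ) (hτ : ∀ i, 0 < τ i)
    (K : Matrix (Fin n) (Fin n) ℝ) (B : Matrix (Fin n) (Fin m) ℝ)
    (H : ℂ → Matrix (Fin n) (Fin n) ℂ)
    (hH : ∀ p, H p = Matrix.diagonal (fun i => Complex.exp (p * (τ i : ℂ))) -
      K.map (Complex.ofReal))
    (α : ℝ) (hα : 0 < α)
    (hinf : ∀ (p : ℂ) (g : Fin n → ℂ), ‖g‖ = 1 →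
      α ≤ ‖Matrix.vecMul g (H p)‖ + ‖Matrix.vecMul g (B.map (Complex.ofReal))‖) :
    (Matrix.fromCols K B).rank = n := by
  by_contra hne
  set A := Matrix.fromCols K B with hA
  have hle : A.rank ≤ n := by simpa using A.rank_le_card_height
  have hlt : A.rank < n := lt_of_le_of_ne hle hne
  -- the kernel of `mulVecLin Aᵀ` is nontrivial
  have hrk : Aᵀ.rank = Module.finrank ℝ (LinearMap.range Aᵀ.mulVecLin) := rfl
  have hdim := LinearMap.finrank_range_add_finrank_ker (Aᵀ.mulVecLin)
  have hdom : Module.finrank ℝ (Fin n → ℝ) = n := by simp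
  have hkerpos : 0 < Module.finrank ℝ (LinearMap.ker Aᵀ.mulVecLin) := by
    by_contra h
    push_neg at h
    have h0 : Module.finrank ℝ (LinearMap.ker Aᵀ.mulVecLin) = 0 := Nat.le_zero.mp h
    rw [h0, hdom] at hdim
    have : Aᵀ.rank = n := by rw [hrk]; omega
    rw [A.rank_transpose] at this
    omega
  have hkerne : LinearMap.ker Aᵀ.mulVecLin ≠ ⊥ := by
    intro h
    rw [h] at hkerpos
    simp at hkerpos
  obtain ⟨g, hgmem, hg0⟩ := (Submodule.ne_bot_iff _).mp hkerne
  have hgA : Matrix.vecMul g A = 0 := by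
    have : Aᵀ.mulVecLin g = 0 := hgmem
    rw [Matrix.mulVecLin_apply, Matrix.mulVec_transpose] at this
    exact this
  have hgK : Matrix.vecMul g K = 0 := by
    have := hgA
    rw [hA, Matrix.vecMul_fromCols] at this
    funext j
    exact congrFun this (Sum.inl j)
  have hgB : Matrix.vecMul g B = 0 := by
    have := hgA
    rw [hA, Matrix.vecMul_fromCols] at this
    funext j
    exact congrFun this (Sum.inr j)
  -- complexify g
  set gc : Fin n → ℂ := fun i => (g i : ℂ) with hgc
  have hgcK : Matrix.vecMul gc (K.map Complex.ofReal) = 0 := by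
    funext j
    have := congrFun hgK j
    simp only [Matrix.vecMul, dotProduct, Matrix.map_apply, Pi.zero_apply, hgc] at this ⊢
    exact_mod_cast congrArg Complex.ofReal this
  have hgcB : Matrix.vecMul gc (B.map Complex.ofReal) = 0 := by
    funext j
    have := congrFun hgB j
    simp only [Matrix.vecMul, dotProduct, Matrix.map_apply, Pi.zero_apply, hgc] at this ⊢
    exact_mod_cast congrArg Complex.ofReal this
  have hgc0 : gc ≠ 0 := by
    intro h
    apply hg0
    funext i
    have := congrFun h i
    simpa [hgc] using this
  set c : ℝ := ‖gc‖ with hc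
  have hcpos : 0 < c := norm_pos_iff.mpr hgc0
  set gh : Fin n → ℂ := ((c : ℂ)⁻¹) • gc with hgh
  have hghnorm : ‖gh‖ = 1 := by
    rw [hgh, norm_smul, norm_inv, Complex.norm_real, Real.norm_eq_abs, abs_of_pos hcpos, ← hc,
      inv_mul_cancel₀ (ne_of_gt hcpos)]
  have hghK : Matrix.vecMul gh (K.map Complex.ofReal) = 0 := by
    rw [hgh, Matrix.smul_vecMul, hgcK, smul_zero]
  have hghB : Matrix.vecMul gh (B.map Complex.ofReal) = 0 := by
    rw [hgh, Matrix.smul_vecMul, hgcB, smul_zero]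
  -- pick t very negative
  have hne' : (Finset.univ : Finset (Fin n)).Nonempty := by
    have : Nonempty (Fin n) := ⟨⟨0, hn⟩⟩
    exact Finset.univ_nonempty
  set τm : ℝ := Finset.univ.inf' hne' τ with hτm
  have hτmle : ∀ j, τm ≤ τ j := fun j => Finset.inf'_le _ (Finset.mem_univ j)
  have hτmpos : 0 < τm := by
    obtain ⟨i0, _, hi0⟩ := Finset.exists_mem_eq_inf' hne' τ
    rw [hτm, hi0]; exact hτ i0
  set t : ℝ := min 0 (Real.log α / τm) - 1 with ht
  have ht0 : t ≤ 0 := by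
    rw [ht]
    have := min_le_left 0 (Real.log α / τm)
    linarith
  have htlt : t < Real.log α / τm := by
    rw [ht]
    have := min_le_right 0 (Real.log α / τm)
    linarith
  have hexp : Real.exp (t * τm) < α := by
    have h1 : t * τm < Real.log α := by
      rw [← lt_div_iff₀ hτmpos] at *
      exact htlt
    calc Real.exp (t * τm) < Real.exp (Real.log α) := Real.exp_lt_exp.mpr h1
      _ = α := Real.exp_log hα
  -- the Hautus bound at p = t
  have hmain := hinf (t : ℂ) gh hghnorm
  rw [hH, Matrix.vecMul_sub, hghK, sub_zero, hghB, norm_zero, add_zero] at hmain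
  have hbound : ‖Matrix.vecMul gh (Matrix.diagonal fun i => Complex.exp ((t : ℂ) * (τ i : ℂ)))‖
      ≤ Real.exp (t * τm) := by
    rw [pi_norm_le_iff_of_nonneg (Real.exp_nonneg _)]
    intro j
    rw [Matrix.vecMul_diagonal]
    have h1 : ‖gh j‖ ≤ 1 := by
      have := norm_le_pi_norm gh j
      rwa [hghnorm] at this
    have h2 : ‖Complex.exp ((t : ℂ) * (τ j : ℂ))‖ = Real.exp (t * τ j) := by
      rw [Complex.norm_exp]
      norm_num
    calc ‖gh j * Complex.exp ((t : ℂ) * (τ j : ℂ))‖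
        = ‖gh j‖ * ‖Complex.exp ((t : ℂ) * (τ j : ℂ))‖ := norm_mul _ _
      _ ≤ 1 * Real.exp (t * τ j) := by
          rw [h2]; exact mul_le_mul_of_nonneg_right h1 (Real.exp_nonneg _)
      _ = Real.exp (t * τ j) := one_mul _
      _ ≤ Real.exp (t * τm) := by
          apply Real.exp_le_exp.mpr
          exact mul_le_mul_of_nonpos_left (hτmle j) ht0
  linarith
end

section
/- With C_h, Z = diag(e^{−ζ_j}), T(p) = diag(e^{pτ_j}) as above, if p ∈ ℂ satisfies Π_{t=1}^h e^{ζ_t + pτ_t} = 1, then the kernel of T(p) − C_h Z has dimension exactly 1, so rank(T(p) − C_h Z) = h − 1. -/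
open Matrix Finset

/-- if `∏_t e^{ζ_t + p τ_t} = 1`, then the kernel of `T(p) − C_h Z`
has dimension exactly `1`, so its rank is `h − 1`. -/
theorem stmt11 {h : ℕ} (hh : 0 < h) (ζ τ : Fin h → ℝ) (hτ : ∀ j, 0 < τ j)
    (C : Matrix (Fin h) (Fin h) ℂ)
    (hC : ∀ i j, C i j = if (i : ℕ) = ((j : ℕ) + 1) % h then 1 else 0)
    (Z : Matrix (Fin h) (Fin h) ℂ)
    (hZ : Z = Matrix.diagonal (fun j => Complex.exp (-(ζ j : ℂ))))
    (T : ℂ → Matrix (Fin h) (Fin h) ℂ)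
    (hT : ∀ p, T p = Matrix.diagonal (fun j => Complex.exp (p * (τ j : ℂ))))
    (p : ℂ)
    (hp : ∏ t : Fin h, Complex.exp ((ζ t : ℂ) + p * (τ t : ℂ)) = 1) :
    Module.finrank ℂ (LinearMap.ker (T p - C * Z).mulVecLin) = 1 ∧
    (T p - C * Z).rank = h - 1 := by
  haveI : NeZero h := ⟨hh.ne'⟩
  set M := T p - C * Z with hM
  set a : ℕ → ℂ := fun k => open Fin.NatCast in (ζ ((k : Fin h)) : ℂ) with ha
  set b : ℕ → ℂ := fun k => open Fin.NatCast in (τ ((k : Fin h)) : ℂ) with hb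
  have haj : ∀ j : Fin h, (ζ j : ℂ) = a j.val := by
    intro j; rw [ha]; simp [Fin.cast_val_eq_self]
  have hbj : ∀ j : Fin h, (τ j : ℂ) = b j.val := by
    intro j; rw [hb]; simp [Fin.cast_val_eq_self]
  -- index shift characterization
  have hidx : ∀ i j : Fin h, ((i : ℕ) = ((j : ℕ) + 1) % h) ↔ j = i - 1 := by
    intro i j
    rw [eq_sub_iff_add_eq]
    have hval : ((j + 1 : Fin h) : ℕ) = ((j : ℕ) + 1) % h := by
      rw [Fin.val_add, Fin.val_one', Nat.add_mod, Nat.mod_mod_of_dvd _ (dvd_refl h),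
        ← Nat.add_mod]
    constructor
    · intro hv; ext; rw [hval, hv]
    · intro hv; rw [← hv, hval]
  -- row formula
  have hrow : ∀ (x : Fin h → ℂ) (i : Fin h),
      M.mulVec x i = Complex.exp (p * (τ i : ℂ)) * x i
        - Complex.exp (-(ζ (i - 1) : ℂ)) * x (i - 1) := by
    intro x i
    rw [hM, sub_mulVec, Pi.sub_apply, hT, mulVec_diagonal]
    congr 1
    have : ((C * Z) *ᵥ x) i = ∑ j, (C * Z) i j * x j := rfl
    rw [this, hZ]
    rw [Finset.sum_eq_single (i - 1)]
    · rw [Matrix.mul_diagonal, hC]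
      simp [(hidx i (i - 1)).2 rfl]
    · intro j _ hj
      rw [Matrix.mul_diagonal, hC]
      have : ¬ ((i : ℕ) = ((j : ℕ) + 1) % h) := fun hc => hj ((hidx i j).1 hc)
      simp [this]
    · simp
  -- kernel characterization
  have hker : ∀ x : Fin h → ℂ, M.mulVecLin x = 0 ↔
      ∀ i : Fin h, x i = Complex.exp (-(ζ (i - 1) : ℂ) - p * (τ i : ℂ)) * x (i - 1) := by
    intro x
    rw [mulVecLin_apply, funext_iff]
    have he : ∀ i : Fin h, Complex.exp (p * (τ i : ℂ)) ≠ 0 := fun i => Complex.exp_ne_zero _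
    constructor
    · intro hx i
      have h1 := hx i
      rw [hrow, Pi.zero_apply, sub_eq_zero] at h1
      rw [Complex.exp_sub, div_mul_eq_mul_div, eq_div_iff (he i)]
      linear_combination h1
    · intro hx i
      rw [hrow, Pi.zero_apply, sub_eq_zero, hx i, ← mul_assoc, ← Complex.exp_add]
      ring_nf
  -- the explicit kernel vector
  set S : ℕ → ℂ := fun n => ∑ k ∈ Finset.range n, (a k + p * b (k + 1)) with hS
  set v : Fin h → ℂ := fun i => Complex.exp (-(S i.val)) with hv
  have hvne : v ≠ 0 := by
    intro hc
    have := congrFun hc ⟨0, hh⟩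
    exact Complex.exp_ne_zero _ this
  obtain ⟨m, hm⟩ : ∃ m, h = m + 1 := ⟨h - 1, (Nat.succ_pred_eq_of_pos hh).symm⟩
  -- the sum identity from hp
  have hsum : Complex.exp (S m + (a m + p * b 0)) = 1 := by
    rw [← hp, ← Complex.exp_sum]
    congr 1
    have hcast : (∑ t : Fin h, ((ζ t : ℂ) + p * (τ t : ℂ)))
        = ∑ k ∈ Finset.range h, (a k + p * b k) := by
      rw [← Fin.sum_univ_eq_sum_range (fun k => a k + p * b k)]
      refine Finset.sum_congr rfl fun t _ => ?_
      rw [haj t, hbj t]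
    rw [hcast, hm]
    show (∑ k ∈ Finset.range m, (a k + p * b (k + 1))) + (a m + p * b 0)
        = ∑ k ∈ Finset.range (m + 1), (a k + p * b k)
    rw [Finset.sum_add_distrib, Finset.sum_add_distrib, ← Finset.mul_sum, ← Finset.mul_sum,
      Finset.sum_range_succ (fun k => a k) m,
      Finset.sum_range_succ' (fun k => b k) m]
    ring
  -- sub-one value lemmas
  have hval1 : ∀ x : ℕ, (x + 1 % h) % h = (x + 1) % h := by
    intro x
    rw [Nat.add_mod, Nat.mod_mod_of_dvd _ (dvd_refl h), ← Nat.add_mod]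
  have hsub1 : ∀ (n : ℕ) (hn : n + 1 < h), (⟨n + 1, hn⟩ : Fin h) - 1 = ⟨n, by omega⟩ := by
    intro n hn
    rw [sub_eq_iff_eq_add]
    ext
    rw [Fin.val_add, Fin.val_one', Fin.val_mk, Fin.val_mk, hval1, Nat.mod_eq_of_lt hn]
  have hsub0 : (0 : Fin h) - 1 = ⟨m, by omega⟩ := by
    rw [sub_eq_iff_eq_add]
    ext
    rw [Fin.val_add, Fin.val_one', Fin.val_zero, hval1]
    show 0 = (m + 1) % h
    rw [← hm]
    exact (Nat.mod_self h).symm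
  -- v satisfies the recurrence
  have hstep : ∀ i : Fin h, v i = Complex.exp (-(ζ (i - 1) : ℂ) - p * (τ i : ℂ)) * v (i - 1) := by
    intro i
    by_cases hi0 : i = 0
    · subst hi0
      rw [hsub0, hv]
      simp only [haj, hbj, Fin.val_mk, Fin.val_zero]
      rw [← Complex.exp_add]
      have e1 : -(a m) - p * b 0 + -(S m) = -(S m + (a m + p * b 0)) := by ring
      have l1 : Complex.exp (-(S m + (a m + p * b 0))) = 1 := by
        rw [Complex.exp_neg, hsum, inv_one]
      rw [e1, l1]
      show Complex.exp (-(S 0)) = 1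
      simp [hS]
    · obtain ⟨n, hn, rfl⟩ : ∃ (n : ℕ) (hn : n + 1 < h), i = ⟨n + 1, hn⟩ := by
        refine ⟨i.val - 1, ?_, ?_⟩
        · have : i.val ≠ 0 := fun hc => hi0 (Fin.ext (by simp [hc]))
          omega
        · ext
          have : i.val ≠ 0 := fun hc => hi0 (Fin.ext (by simp [hc]))
          simp; omega
      rw [hsub1 n hn, hv]
      simp only [haj, hbj, Fin.val_mk]
      rw [← Complex.exp_add]
      congr 1
      show -(S (n + 1)) = -(a n) - p * b (n + 1) + -(S n)
      have e2 : S (n + 1) = S n + (a n + p * b (n + 1)) := Finset.sum_range_succ _ n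
      rw [e2]
      ring
  have hvker : v ∈ LinearMap.ker M.mulVecLin := by
    rw [LinearMap.mem_ker]
    exact (hker v).2 hstep
  -- kernel = span of v
  have hker_eq : LinearMap.ker M.mulVecLin = Submodule.span ℂ {v} := by
    refine le_antisymm ?_ ?_
    · intro x hx
      rw [LinearMap.mem_ker] at hx
      have hx' := (hker x).1 hx
      have key : ∀ (n : ℕ) (hn : n < h), x ⟨n, hn⟩ = x ⟨0, hh⟩ * v ⟨n, hn⟩ := by
        intro n
        induction n with
        | zero =>
          intro hn
          have hv1 : v ⟨0, hn⟩ = 1 := by rw [hv]; simp [hS]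
          rw [hv1, mul_one]
        | succ n ih =>
          intro hn
          have hlt : n < h := by omega
          have h1 := hx' ⟨n + 1, hn⟩
          have h2 := hstep ⟨n + 1, hn⟩
          rw [hsub1 n hn] at h1 h2
          rw [h1, ih hlt, h2]
          ring
      have hx0 : x = x ⟨0, hh⟩ • v := by
        funext i
        have := key i.val i.isLt
        simpa [Fin.eta] using this
      rw [hx0]
      exact Submodule.smul_mem _ _ (Submodule.mem_span_singleton_self v)
    · rw [Submodule.span_singleton_le_iff_mem]
      exact hvker
  have hfr : Module.finrank ℂ (LinearMap.ker M.mulVecLin) = 1 := by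
    rw [hker_eq]
    exact finrank_span_singleton hvne
  refine ⟨hfr, ?_⟩
  have hrn := LinearMap.finrank_range_add_finrank_ker M.mulVecLin
  rw [hfr] at hrn
  have hdom : Module.finrank ℂ (Fin h → ℂ) = h := by simp
  rw [hdom] at hrn
  have : M.rank = Module.finrank ℂ (LinearMap.range M.mulVecLin) := rfl
  rw [this]
  omega
end

section
/- With notation as above (K = (I⁻_w)^T I⁺ Z, B = (I⁻_w)^T Γ for some Γ ∈ M_{k,m}(ℝ)), every column of B is a linear combination of columns of K. Specifically, if J : {1,...,k} → {1,...,n} selects for each vertex v_i an edge ε_{J(i)} with head v_i, then the r-th column of B equals Σ_{i=1}^k γ_{ir} e^{ζ_{J(i)}} K_{J(i)}, where K_{J(i)} is the J(i)-th column of K. In particular, the column space of [K, B] equals the column space of K. -/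
open Matrix Finset

/-- with `K = (I⁻_w)ᵀ I⁺ Z` and `B = (I⁻_w)ᵀ Γ`, every column of `B`
is a linear combination of columns of `K`: explicitly
`B_r = ∑_i γ_{ir} e^{ζ_{J(i)}} K_{J(i)}`, where `J(i)` selects an incoming edge at
vertex `v_i`. In particular the column space of `[K, B]` equals that of `K`. -/
theorem stmt15 {k n m : ℕ} (tail head : Fin n → Fin k)
    (w : Fin k → Fin n → ℝ)
    (hw01 : ∀ i j, 0 ≤ w i j ∧ w i j ≤ 1)
    (hwsum : ∀ i, ∑ j, w i j = 1)
    (hwsupp : ∀ i j, w i j = 0 ↔ tail j ≠ i)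
    (hout : ∀ v : Fin k, ∃ e : Fin n, tail e = v)
    (hin : ∀ v : Fin k, ∃ e : Fin n, head e = v)
    (ζ : Fin n → ℝ)
    (Iw : Matrix (Fin k) (Fin n) ℝ) (hIw : ∀ i j, Iw i j = w i j)
    (Ip : Matrix (Fin k) (Fin n) ℝ) (hIp : ∀ i j, Ip i j = if head j = i then 1 else 0)
    (K : Matrix (Fin n) (Fin n) ℝ)
    (hK : K = Iwᵀ * Ip * Matrix.diagonal (fun j => Real.exp (-ζ j)))
    (J : Fin k → Fin n) (hJ : ∀ i, head (J i) = i)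
    (Γ : Matrix (Fin k) (Fin m) ℝ)
    (B : Matrix (Fin n) (Fin m) ℝ) (hB : B = Iwᵀ * Γ) :
    (∀ (j : Fin n) (r : Fin m),
      B j r = ∑ i : Fin k, Γ i r * Real.exp (ζ (J i)) * K j (J i)) ∧
    LinearMap.range (Matrix.fromCols K B).mulVecLin =
      LinearMap.range K.mulVecLin := by
  have hKe : ∀ (j e : Fin n), K j e = w (head e) j * Real.exp (-ζ e) := by
    intro j e
    subst hK
    rw [Matrix.mul_diagonal, Matrix.mul_apply]
    congr 1
    simp only [Matrix.transpose_apply, hIw, hIp, mul_ite, mul_one, mul_zero,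
      Finset.sum_ite_eq, Finset.mem_univ, if_true]
  have h1 : ∀ (j : Fin n) (r : Fin m),
      B j r = ∑ i : Fin k, Γ i r * Real.exp (ζ (J i)) * K j (J i) := by
    intro j r
    subst hB
    rw [Matrix.mul_apply]
    apply Finset.sum_congr rfl
    intro i _
    rw [Matrix.transpose_apply, hIw, hKe, hJ]
    rw [show Γ i r * Real.exp (ζ (J i)) * (w i j * Real.exp (-ζ (J i)))
        = w i j * Γ i r * (Real.exp (ζ (J i)) * Real.exp (-ζ (J i))) by ring]
    rw [← Real.exp_add, add_neg_cancel, Real.exp_zero, mul_one]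
  refine ⟨h1, ?_⟩
  -- B = K * C
  set C : Matrix (Fin n) (Fin m) ℝ :=
    Matrix.of (fun e r => ∑ i : Fin k, if J i = e then Γ i r * Real.exp (ζ (J i)) else 0)
    with hC
  have hBC : B = K * C := by
    ext j r
    have h2 : (K * C) j r = ∑ i : Fin k, Γ i r * Real.exp (ζ (J i)) * K j (J i) := by
      rw [Matrix.mul_apply]
      simp only [hC, Matrix.of_apply, Finset.mul_sum, mul_ite, mul_zero]
      rw [Finset.sum_comm]
      simp only [Finset.sum_ite_eq, Finset.mem_univ, if_true]
      exact Finset.sum_congr rfl fun i _ => by ring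
    rw [h1 j r, h2]
  apply le_antisymm
  · rintro x ⟨v, rfl⟩
    have hv : v = Sum.elim (fun i => v (Sum.inl i)) (fun j => v (Sum.inr j)) := by
      funext z; cases z <;> rfl
    rw [Matrix.mulVecLin_apply, hv, Matrix.fromCols_mulVec_sumElim]
    refine ⟨(fun i => v (Sum.inl i)) + C.mulVec (fun j => v (Sum.inr j)), ?_⟩
    rw [Matrix.mulVecLin_apply, Matrix.mulVec_add, Matrix.mulVec_mulVec, ← hBC]
  · rintro x ⟨v, rfl⟩
    refine ⟨Sum.elim v 0, ?_⟩
    rw [Matrix.mulVecLin_apply, Matrix.mulVecLin_apply,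
      Matrix.fromCols_mulVec_sumElim, Matrix.mulVec_zero, add_zero]
end

section
/- Consider the two-dimensional difference equation y_1(t) = y_2(t − τ), y_2(t) = y_1(t − 1) + u(t) for t ≥ 0, with 0 < τ < 1. For any initial data (φ_0, ψ_0) ∈ L^q([−1,0]) × L^q([−τ,0]) and any target (φ_1, ψ_1) in the same space, the control u defined by u(t) = φ_1(t−1) − φ_0(t−1) for t ∈ [0,1] and u(t) = ψ_1(t−1−τ) − ψ_0(t−1−τ) for t ∈ (1, 1+τ] steers the solution so that y_1(1+τ+s) = φ_1(s) for s ∈ [−1,0] and y_2(1+τ+s) = ψ_1(s) for s ∈ [−τ,0]. Hence the system is exactly controllable in the product state space in time 1+τ. -/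
open Set

/-- for the difference system `y₁(t) = y₂(t−τ)`,
`y₂(t) = y₁(t−1) + u(t)` with `0 < τ < 1`, the explicit control
`u(t) = φ₁(t−1) − φ₀(t−1)` on `[0,1)` and `u(t) = ψ₁(t−1−τ) − ψ₀(t−1−τ)` on
`[1,1+τ)` steers the history of the solution from `(φ₀, ψ₀)` to `(φ₁, ψ₁)` in
time `1 + τ`: the system is exactly controllable in the product state space. -/
theorem stmt18 (τ : ℝ) (hτ0 : 0 < τ) (hτ1 : τ < 1)
    (φ₀ φ₁ ψ₀ ψ₁ : ℝ → ℝ) (y₁ y₂ u : ℝ → ℝ)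
    (hinit1 : ∀ s ∈ Ico (-1 : ℝ) 0, y₁ s = φ₀ s)
    (hinit2 : ∀ s ∈ Ico (-τ) 0, y₂ s = ψ₀ s)
    (heq1 : ∀ t : ℝ, 0 ≤ t → y₁ t = y₂ (t - τ))
    (heq2 : ∀ t : ℝ, 0 ≤ t → y₂ t = y₁ (t - 1) + u t)
    (hu1 : ∀ t ∈ Ico (0 : ℝ) 1, u t = φ₁ (t - 1) - φ₀ (t - 1))
    (hu2 : ∀ t ∈ Ico (1 : ℝ) (1 + τ), u t = ψ₁ (t - 1 - τ) - ψ₀ (t - 1 - τ)) :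
    (∀ s ∈ Ico (-1 : ℝ) 0, y₁ (1 + τ + s) = φ₁ s) ∧
    (∀ s ∈ Ico (-τ) 0, y₂ (1 + τ + s) = ψ₁ s) := by
  constructor
  · intro s hs
    obtain ⟨hs1, hs2⟩ := hs
    have h1 : y₁ (1 + τ + s) = y₂ (1 + τ + s - τ) := heq1 _ (by linarith)
    have h2 : y₂ (1 + τ + s - τ) = y₁ (1 + τ + s - τ - 1) + u (1 + τ + s - τ) :=
      heq2 _ (by linarith)
    have h3 : (1 + τ + s - τ - 1) = s := by ring
    have h4 : u (1 + τ + s - τ) = φ₁ (1 + τ + s - τ - 1) - φ₀ (1 + τ + s - τ - 1) :=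
      hu1 _ ⟨by linarith, by linarith⟩
    rw [h1, h2, h4, h3, hinit1 s ⟨hs1, hs2⟩]
    ring
  · intro s hs
    obtain ⟨hs1, hs2⟩ := hs
    have h2 : y₂ (1 + τ + s) = y₁ (1 + τ + s - 1) + u (1 + τ + s) :=
      heq2 _ (by linarith)
    have h1 : y₁ (1 + τ + s - 1) = y₂ (1 + τ + s - 1 - τ) := heq1 _ (by linarith)
    have h3 : (1 + τ + s - 1 - τ) = s := by ring
    have h4 : u (1 + τ + s) = ψ₁ (1 + τ + s - 1 - τ) - ψ₀ (1 + τ + s - 1 - τ) :=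
      hu2 _ ⟨by linarith, by linarith⟩
    rw [h2, h1, h4, h3, hinit2 s ⟨hs1, hs2⟩]
    ring
end
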